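/- arXiv:0704.3911 — 2 statements merged into one kernel-verified Lean document; each statement's English description precedes it below -/
import Mathlib

section
/- Let K be a nontrivial compact metrizable group and let Γ be a group of continuous automorphisms of K. Then the following are equivalent: (1) Γ acts distally on K; (2) for every nontrivial closed Γ-invariant subgroup L of K, the action of Γ on L is not ergodic. -/
open MeasureTheory Topology TopologicalSpace
open scoped UniformConvergence Pointwise

/-- The normalized Haar measure on a compact topological group,
taken with respect to the Borel σ-algebra. -/
noncomputable def haarB (K : Type*) [Group K] [TopologicalSpace K] [IsTopologicalGroup K]
    [CompactSpace K] : @Measure K (borel K) :=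
  letI : MeasurableSpace K := borel K
  haveI : BorelSpace K := ⟨rfl⟩
  Measure.haarMeasure ⊤

/-- A set `S` of transformations of a compact group `K` acts *ergodically* if every Borel
subset invariant under all elements of `S` is null or co-null for the normalized Haar measure. -/
def IsErgodicAction {K : Type*} [Group K] [TopologicalSpace K] [IsTopologicalGroup K]
    [CompactSpace K] (S : Set (K → K)) : Prop :=
  ∀ A : Set K, MeasurableSet[borel K] A → (∀ f ∈ S, f '' A = A) →
    haarB K A = 0 ∨ haarB K A = 1

/-- A single transformation of a compact group is *ergodic* if every Borel subset it leaves
invariant is null or co-null for the normalized Haar measure. -/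
def IsErgodicMap {K : Type*} [Group K] [TopologicalSpace K] [IsTopologicalGroup K]
    [CompactSpace K] (f : K → K) : Prop :=
  ∀ A : Set K, MeasurableSet[borel K] A → f '' A = A → haarB K A = 0 ∨ haarB K A = 1

/-- A set `S` of transformations of a topological group acts *distally* if for every `x ≠ 1`
the identity is not in the closure of the orbit of `x`. -/
def IsDistalAction {K : Type*} [Group K] [TopologicalSpace K] (S : Set (K → K)) : Prop :=
  ∀ x : K, x ≠ 1 → (1 : K) ∉ closure {y : K | ∃ f ∈ S, f x = y}

/-- The set of maps on `K` determined by a subgroup `Γ` of the automorphism group of `K`. -/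
def Subgroup.autMaps {K : Type*} [Group K] (Γ : Subgroup (MulAut K)) : Set (K → K) :=
  {f : K → K | ∃ α ∈ Γ, ⇑α = f}

/-- The set of maps on `K` determined by the cyclic group generated by an automorphism `α`. -/
def MulAut.cycMaps {K : Type*} [Group K] (α : MulAut K) : Set (K → K) :=
  {f : K → K | ∃ n : ℤ, ⇑(α ^ n) = f}

/-!
If `Γ` acts ergodically on a nontrivial closed invariant subgroup `L`, take a countable
neighbourhood basis `(Uₙ)` of `1` in `L`. The `Γ`-saturation of each `Uₙ` is open and invariant,
hence conull, so their intersection is conull; as Haar measure has no atom of full mass, it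
contains some `x ≠ 1`, and the orbit of `x` meets every `Uₙ`.

Conversely, if `1` lies in the orbit closure of some `x ≠ 1`, let `L` be the closed subgroup
generated by `Γ x`. For a `Γ`-invariant Borel set `A ⊆ L`, the function `g ↦ μ (g • A ∆ A)` is
`Γ`-invariant and tends to `0` at `1`, so it vanishes on `Γ x`. Hence the a.e. stabilizer of `A`,
a closed subgroup, contains `Γ x` and is all of `L`; ergodicity of the translation action of `L`
on itself then forces `μ A ∈ {0, 1}`.
-/

open Set Filter MulAction
open scoped symmDiff ENNReal

lemma exists_ne_mem_closure_orbit_of_ergodic {X Γ : Type*} [TopologicalSpace X] [T1Space X]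
    [FirstCountableTopology X] [MeasurableSpace X] [OpensMeasurableSpace X] [Group Γ]
    [MulAction Γ X] [ContinuousConstSMul Γ X] (μ : Measure X) [IsProbabilityMeasure μ]
    [μ.IsOpenPosMeasure]
    (herg : ∀ A, MeasurableSet A → (∀ γ : Γ, γ • A = A) → μ A = 0 ∨ μ A = 1)
    {x₀ : X} (hx₀ : μ {x₀} ≠ 1) : ∃ x ≠ x₀, x₀ ∈ closure (orbit Γ x) := by
  obtain ⟨U, hU⟩ := (𝓝 x₀).exists_antitone_basis
  set V : ℕ → Set X := fun n ↦ ⋃ γ : Γ, γ • interior (U n)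
  have hVopen n : IsOpen (V n) := isOpen_iUnion fun γ ↦ isOpen_interior.smul γ
  have hVinv n (δ : Γ) : δ • V n = V n := by
    simp only [V, smul_set_iUnion, smul_smul]
    exact (Equiv.mulLeft δ).surjective.iUnion_comp fun γ ↦ γ • interior (U n)
  have hV n : ∀ᵐ x ∂μ, x ∈ V n := by
    have hx₀V : x₀ ∈ V n :=
      mem_iUnion.2 ⟨1, by rw [one_smul]; exact mem_interior_iff_mem_nhds.2 (hU.mem n)⟩
    rcases herg _ (hVopen n).measurableSet (hVinv n) with h0 | h1
    · exact absurd h0 ((hVopen n).measure_ne_zero μ ⟨x₀, hx₀V⟩)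
    · exact (mem_ae_iff_prob_eq_one (hVopen n).measurableSet).2 h1
  have hne : ∃ᵐ x ∂μ, x ≠ x₀ := by
    simp_rw [Filter.Frequently, ne_eq, not_not, ← mem_singleton_iff]
    exact fun h ↦ hx₀ ((mem_ae_iff_prob_eq_one (measurableSet_singleton x₀)).1 h)
  obtain ⟨x, hx, hxV⟩ := (hne.and_eventually (ae_all_iff.2 hV)).exists
  refine ⟨x, hx, (mem_closure_iff_nhds_basis hU.toHasBasis).2 fun n _ ↦ ?_⟩
  obtain ⟨γ, y, hy, rfl⟩ := mem_iUnion.1 (hxV n)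
  exact ⟨y, ⟨γ⁻¹, inv_smul_smul γ y⟩, interior_subset hy⟩

section AEStabilizer

variable {G : Type*} [Group G] [MeasurableSpace G]

lemma measure_smul_smul_symmDiff {Γ : Type*} [Group Γ] [MulDistribMulAction Γ G]
    (μ : Measure G) [SMulInvariantMeasure Γ G μ] {A : Set G} (hA : ∀ γ : Γ, γ • A = A)
    (γ : Γ) (x : G) : μ (((γ • x) • A) ∆ A) = μ ((x • A) ∆ A) := by
  have hmap : (γ • x) • A = γ • (x • A) := by
    conv_lhs => rw [← hA γ]
    simp only [← Set.image_smul, image_image, smul_eq_mul, smul_mul']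
  have := measure_smul μ γ ((x • A) ∆ A)
  rwa [smul_set_symmDiff, hA γ, ← hmap] at this

lemma measure_singleton_one_ne_one [Nontrivial G] [MeasurableSingletonClass G] [MeasurableMul G]
    (μ : Measure G) [IsProbabilityMeasure μ] [μ.IsMulLeftInvariant] : μ {1} ≠ 1 := by
  intro h1
  obtain ⟨z, hz⟩ := exists_ne (1 : G)
  have hz1 : μ {z} = 1 := by
    rw [← h1, ← measure_smul μ z {1}, smul_set_singleton, smul_eq_mul, mul_one]
  have h2 : μ ({1} ∪ {z}) = 2 := by
    rw [measure_union (disjoint_singleton.2 hz.symm) (measurableSet_singleton z), h1, hz1,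
      one_add_one_eq_two]
  exact absurd (h2 ▸ prob_le_one) (by norm_num)

lemma measure_eq_zero_or_one_of_aestabilizer_eq_top [MeasurableMul₂ G] [MeasurableInv G]
    (μ : Measure G) [IsProbabilityMeasure μ] [μ.IsMulLeftInvariant] {A : Set G}
    (hA : NullMeasurableSet A μ) (h : aestabilizer G μ A = ⊤) : μ A = 0 ∨ μ A = 1 := by
  simpa [eventuallyConst_set', ae_eq_univ, prob_compl_eq_zero_iff₀ hA] using
    aeconst_of_aestabilizer_eq_top G hA h

variable [TopologicalSpace G] [IsTopologicalGroup G] [BorelSpace G] (μ : Measure G)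
  [μ.IsMulLeftInvariant] [μ.InnerRegularCompactLTTop] [IsLocallyFiniteMeasure μ]
  {A : Set G} (hA : NullMeasurableSet A μ) (hμA : μ A ≠ ∞)
include hA hμA

lemma tendsto_measure_smul_symmDiff_nhds_one :
    Tendsto (fun g : G ↦ μ ((g • A) ∆ A)) (𝓝 1) (𝓝 0) := by
  let f : G → C(G, G) := fun g ↦ ⟨(g⁻¹ • ·), continuous_const_smul _⟩
  have hf : Continuous f := ContinuousMap.continuous_of_continuous_uncurry _
    (continuous_fst.inv.smul continuous_snd)
  have := tendsto_measure_symmDiff_preimage_nhds_zero (hf.tendsto 1)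
    (.of_forall fun g ↦ measurePreserving_mul_left μ g⁻¹) (measurePreserving_mul_left μ _) hA hμA
  simpa only [f, ContinuousMap.coe_mk, preimage_smul_inv, inv_one, one_smul, preimage_id']
    using this

lemma mem_aestabilizer_of_one_mem_closure_orbit {Γ : Type*} [Group Γ]
    [MulDistribMulAction Γ G] [SMulInvariantMeasure Γ G μ] (hAΓ : ∀ γ : Γ, γ • A = A) {x : G}
    (hx : (1 : G) ∈ closure (orbit Γ x)) : x ∈ aestabilizer G μ A := by
  rw [mem_aestabilizer, ← measure_symmDiff_eq_zero_iff]
  have : (𝓝[orbit Γ x] 1).NeBot := mem_closure_iff_nhdsWithin_neBot.mp hx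
  have hconst : Tendsto (fun g : G ↦ μ ((g • A) ∆ A)) (𝓝[orbit Γ x] 1)
      (𝓝 (μ ((x • A) ∆ A))) :=
    tendsto_const_nhds.congr' <| eventually_nhdsWithin_of_forall <| by
      rintro _ ⟨γ, rfl⟩
      exact (measure_smul_smul_symmDiff μ hAΓ γ x).symm
  exact tendsto_nhds_unique hconst
    ((tendsto_measure_smul_symmDiff_nhds_one μ hA hμA).mono_left nhdsWithin_le_nhds)

lemma isClosed_aestabilizer : IsClosed (aestabilizer G μ A : Set G) := by
  let f : G → C(G, G) := fun g ↦ ⟨(g • ·), continuous_const_smul _⟩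
  have hf : Continuous f := ContinuousMap.continuous_of_continuous_uncurry _ continuous_smul
  have := isClosed_setOfPred_preimage_ae_eq hf (fun g ↦ measurePreserving_mul_left μ g) A hA hμA
  convert this.preimage continuous_inv using 1
  ext g
  simp only [SetLike.mem_coe, mem_aestabilizer, mem_preimage, mem_ofPred_eq, f,
    ContinuousMap.coe_mk, preimage_smul_inv]

end AEStabilizer

section CompactGroup

variable {G : Type*} [Group G] [TopologicalSpace G] [IsTopologicalGroup G] [CompactSpace G]

lemma isErgodicAction_iff [MeasurableSpace G] [BorelSpace G] (S : Set (G → G)) :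
    IsErgodicAction S ↔ ∀ A : Set G, MeasurableSet A → (∀ f ∈ S, f '' A = A) →
      Measure.haarMeasure ⊤ A = 0 ∨ Measure.haarMeasure ⊤ A = 1 := by
  obtain rfl := BorelSpace.measurable_eq (α := G)
  rfl

instance isProbabilityMeasure_haarMeasure_top [MeasurableSpace G] [BorelSpace G] :
    IsProbabilityMeasure (Measure.haarMeasure (⊤ : PositiveCompacts G)) :=
  ⟨by simpa using Measure.haarMeasure_self (K₀ := (⊤ : PositiveCompacts G))⟩

variable {Γ : Type*} [Group Γ] [MulDistribMulAction Γ G] [ContinuousConstSMul Γ G]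

lemma smulInvariantMeasure_of_isHaarMeasure [MeasurableSpace G] [BorelSpace G]
    (μ : Measure G) [μ.IsHaarMeasure] : SMulInvariantMeasure Γ G μ :=
  ⟨fun γ _ hs ↦ ((MulDistribMulAction.toMonoidHom G γ).measurePreserving
    (continuous_const_smul γ) (MulAction.surjective γ) rfl).measure_preimage hs.nullMeasurableSet⟩

lemma exists_ne_one_mem_closure_orbit_of_isErgodicAction [T1Space G] [FirstCountableTopology G]
    [Nontrivial G] (herg : IsErgodicAction (range fun γ : Γ ↦ (γ • · : G → G))) :
    ∃ x ≠ 1, (1 : G) ∈ closure (orbit Γ x) := by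
  borelize G
  rw [isErgodicAction_iff] at herg
  refine exists_ne_mem_closure_orbit_of_ergodic (Measure.haarMeasure ⊤) (fun A hA hAΓ ↦ ?_)
    (measure_singleton_one_ne_one _)
  exact herg A hA (by rintro _ ⟨γ, rfl⟩; exact image_smul.trans (hAΓ γ))

lemma isErgodicAction_of_dense_closure_orbit [SecondCountableTopology G] {x : G}
    (hx : (1 : G) ∈ closure (orbit Γ x)) (hdense : Dense (Subgroup.closure (orbit Γ x) : Set G)) :
    IsErgodicAction (range fun γ : Γ ↦ (γ • · : G → G)) := by
  borelize G
  rw [isErgodicAction_iff]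
  intro A hA hAS
  set μ := Measure.haarMeasure (⊤ : PositiveCompacts G)
  have := smulInvariantMeasure_of_isHaarMeasure (Γ := Γ) μ
  have hAΓ (γ : Γ) : γ • A = A := image_smul.symm.trans (hAS _ ⟨γ, rfl⟩)
  have horbit : orbit Γ x ⊆ aestabilizer G μ A := by
    rintro _ ⟨γ, rfl⟩
    exact mem_aestabilizer_of_one_mem_closure_orbit μ hA.nullMeasurableSet (measure_ne_top μ A)
      hAΓ (by rwa [orbit_smul])
  have htop : aestabilizer G μ A = ⊤ := by
    rw [eq_top_iff, ← SetLike.coe_subset_coe, Subgroup.coe_top, ← hdense.closure_eq]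
    exact closure_minimal ((Subgroup.closure_le _).2 horbit)
      (isClosed_aestabilizer μ hA.nullMeasurableSet (measure_ne_top μ A))
  exact measure_eq_zero_or_one_of_aestabilizer_eq_top μ hA.nullMeasurableSet htop

end CompactGroup

section InvariantSubgroup

variable {K Γ : Type*} [Group K] [Group Γ] [MulDistribMulAction Γ K]

abbrev Subgroup.invariantMulDistribMulAction (L : Subgroup K)
    (hL : ∀ (γ : Γ), ∀ x ∈ L, γ • x ∈ L) : MulDistribMulAction Γ L where
  smul γ x := ⟨γ • (x : K), hL γ x x.2⟩
  one_smul x := Subtype.ext (one_smul Γ (x : K))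
  mul_smul γ δ x := Subtype.ext (mul_smul γ δ (x : K))
  smul_mul γ x y := Subtype.ext (smul_mul' γ (x : K) y)
  smul_one γ := Subtype.ext (smul_one γ)

lemma smul_mem_topologicalClosure_closure [TopologicalSpace K] [IsTopologicalGroup K]
    [ContinuousConstSMul Γ K] {s : Set K} (hs : ∀ (γ : Γ), ∀ y ∈ s, γ • y ∈ s) (γ : Γ) {y : K}
    (hy : y ∈ (Subgroup.closure s).topologicalClosure) :
    γ • y ∈ (Subgroup.closure s).topologicalClosure := by
  let f := MulDistribMulAction.toMonoidHom K γ
  have hle : Subgroup.closure s ≤ (Subgroup.closure s).comap f :=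
    (Subgroup.closure_le _).2 fun z hz ↦ Subgroup.subset_closure (hs γ z hz)
  exact Subgroup.topologicalClosure_minimal _
    (t := (Subgroup.closure s).topologicalClosure.comap f)
    (hle.trans (Subgroup.comap_mono (Subgroup.le_topologicalClosure _)))
    ((Subgroup.isClosed_topologicalClosure _).preimage (continuous_const_smul γ)) hy

variable {L : Subgroup K} [MulDistribMulAction Γ L]
  (hcompat : ∀ (γ : Γ) (x : L), ((γ • x : L) : K) = γ • (x : K))
include hcompat

lemma image_val_orbit (x : L) : Subtype.val '' orbit Γ x = orbit Γ (x : K) := by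
  ext y
  simp [orbit, hcompat]

variable [TopologicalSpace K]

lemma one_mem_closure_orbit_subgroup_iff (x : L) :
    (1 : L) ∈ closure (orbit Γ x) ↔ (1 : K) ∈ closure (orbit Γ (x : K)) := by
  have hind : IsInducing (Subtype.val : L → K) := .subtypeVal
  rw [hind.closure_eq_preimage_closure_image, image_val_orbit hcompat]
  rfl

variable [ContinuousConstSMul Γ K]

lemma continuousConstSMul_of_coe_smul : ContinuousConstSMul Γ L :=
  ⟨fun γ ↦ IsInducing.subtypeVal.continuous_iff.2 <| by
    simpa only [Function.comp_def, hcompat] using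
      (continuous_const_smul γ).comp continuous_subtype_val⟩

lemma isErgodicAction_of_le_topologicalClosure_closure_orbit [IsTopologicalGroup K]
    [CompactSpace L] [SecondCountableTopology L] {x : L}
    (hx : (1 : K) ∈ closure (orbit Γ (x : K)))
    (hL : L ≤ (Subgroup.closure (orbit Γ (x : K))).topologicalClosure) :
    IsErgodicAction (range fun γ : Γ ↦ (γ • · : L → L)) := by
  have := continuousConstSMul_of_coe_smul hcompat
  refine isErgodicAction_of_dense_closure_orbit
    ((one_mem_closure_orbit_subgroup_iff hcompat x).2 hx) ?_
  have himage : Subtype.val '' (Subgroup.closure (orbit Γ x) : Set L) =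
      Subgroup.closure (orbit Γ (x : K)) := by
    rw [← image_val_orbit hcompat, ← L.coe_subtype, ← MonoidHom.map_closure, Subgroup.coe_map]
  have hind : IsInducing (Subtype.val : L → K) := .subtypeVal
  rw [hind.dense_iff, himage]
  exact fun y ↦ hL y.2

end InvariantSubgroup

section AutMaps

variable {K : Type*} [Group K] (Γ : Subgroup (MulAut K))

lemma Subgroup.setOf_autMaps_apply_eq_orbit (x : K) :
    {y : K | ∃ f ∈ Γ.autMaps, f x = y} = orbit Γ x := by
  ext y
  simp [Subgroup.autMaps, orbit, Subgroup.smul_def, MulAut.smul_def]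

lemma isDistalAction_autMaps_iff [TopologicalSpace K] :
    IsDistalAction Γ.autMaps ↔ ∀ x : K, x ≠ 1 → (1 : K) ∉ closure (orbit Γ x) := by
  simp only [IsDistalAction, Γ.setOf_autMaps_apply_eq_orbit]

lemma setOf_coe_apply_eq_range_smul (L : Subgroup K) [MulAction Γ L]
    (hcompat : ∀ (γ : Γ) (x : L), ((γ • x : L) : K) = γ • (x : K)) :
    {g : L → L | ∃ α ∈ Γ, ∀ x : L, (g x : K) = α (x : K)} = range fun γ : Γ ↦ (γ • · : L → L) := by
  ext g
  constructor
  · rintro ⟨α, hα, hg⟩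
    exact ⟨⟨α, hα⟩, funext fun x ↦ Subtype.ext ((hcompat _ x).trans (hg x).symm)⟩
  · rintro ⟨γ, rfl⟩
    exact ⟨γ, γ.2, hcompat γ⟩

end AutMaps

theorem stmt0_general {K : Type*} [Group K] [TopologicalSpace K] [IsTopologicalGroup K]
    [CompactSpace K] [MetrizableSpace K]
    (Γ : Subgroup (MulAut K)) (hcont : ∀ α ∈ Γ, Continuous ⇑α) :
    IsDistalAction Γ.autMaps ↔
      ∀ (L : Subgroup K) (hL : IsClosed (L : Set K)), L ≠ ⊥ →
        (∀ α ∈ Γ, ∀ x ∈ L, α x ∈ L) →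
        haveI : CompactSpace L := isCompact_iff_compactSpace.mp (hL.isCompact)
        ¬ IsErgodicAction {g : L → L | ∃ α ∈ Γ, ∀ x : L, (g x : K) = α (x : K)} := by
  have : ContinuousConstSMul Γ K := ⟨fun γ ↦ hcont γ γ.2⟩
  rw [isDistalAction_autMaps_iff]
  constructor
  · intro hdist L hL hbot hinv herg
    let := L.invariantMulDistribMulAction fun γ : Γ ↦ hinv γ γ.2
    have : CompactSpace L := isCompact_iff_compactSpace.mp hL.isCompact
    have : FirstCountableTopology L := inferInstanceAs (FirstCountableTopology (L : Set K))
    have : Nontrivial L := L.nontrivial_iff_ne_bot.2 hbot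
    have := continuousConstSMul_of_coe_smul (Γ := Γ) (L := L) fun _ _ ↦ rfl
    rw [setOf_coe_apply_eq_range_smul Γ L fun _ _ ↦ rfl] at herg
    obtain ⟨x, hx1, hx⟩ := exists_ne_one_mem_closure_orbit_of_isErgodicAction herg
    exact hdist x (by simpa using hx1)
      ((one_mem_closure_orbit_subgroup_iff (fun _ _ ↦ rfl) x).1 hx)
  · intro hcrit x hx1 hx
    set L := (Subgroup.closure (orbit Γ x)).topologicalClosure
    have hinv : ∀ α ∈ Γ, ∀ y ∈ L, α y ∈ L := fun α hα _ ↦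
      smul_mem_topologicalClosure_closure (Γ := Γ) (fun γ _ ↦ mem_orbit_of_mem_orbit γ) ⟨α, hα⟩
    have hxL : x ∈ L :=
      Subgroup.le_topologicalClosure _ (Subgroup.subset_closure (mem_orbit_self x))
    refine hcrit L (Subgroup.isClosed_topologicalClosure _)
      (fun h ↦ hx1 (Subgroup.mem_bot.1 (h ▸ hxL))) hinv ?_
    let := L.invariantMulDistribMulAction fun γ : Γ ↦ hinv γ γ.2
    have : CompactSpace L := isCompact_iff_compactSpace.mp (Subgroup.isClosed_topologicalClosure _).isCompact
    have : MetrizableSpace L := inferInstanceAs (MetrizableSpace (L : Set K))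
    rw [setOf_coe_apply_eq_range_smul Γ L fun _ _ ↦ rfl]
    exact isErgodicAction_of_le_topologicalClosure_closure_orbit (x := ⟨x, hxL⟩)
      (fun _ _ ↦ rfl) hx le_rfl

/-- Let `K` be a nontrivial compact metrizable group and `Γ` a group of
continuous automorphisms of `K`.  Then `Γ` acts distally on `K` if and only if for every
nontrivial closed `Γ`-invariant subgroup `L` of `K` the action of `Γ` on `L` is not ergodic. -/
theorem stmt0 {K : Type*} [Group K] [TopologicalSpace K] [IsTopologicalGroup K]
    [CompactSpace K] [MetrizableSpace K] [Nontrivial K]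
    (Γ : Subgroup (MulAut K)) (hcont : ∀ α ∈ Γ, Continuous ⇑α) :
    IsDistalAction Γ.autMaps ↔
      ∀ (L : Subgroup K) (hL : IsClosed (L : Set K)), L ≠ ⊥ →
        (∀ α ∈ Γ, ∀ x ∈ L, α x ∈ L) →
        haveI : CompactSpace L := isCompact_iff_compactSpace.mp (hL.isCompact)
        ¬ IsErgodicAction {g : L → L | ∃ α ∈ Γ, ∀ x : L, (g x : K) = α (x : K)} :=
  stmt0_general Γ hcont
end

section
/- Let Γ be a group of continuous automorphisms of a compact metrizable group K and α a continuous automorphism of K. Suppose Γ acts distally on K, α is distal on K, and αΓα⁻¹ = Γ. Then the group generated by Γ and α acts distally on K. -/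
open MeasureTheory Topology TopologicalSpace
open scoped UniformConvergence Pointwise

/-! Suppose `1` lies in the closure of the orbit of `z ≠ 1` under `G = ΓΛ`, with `Γ` normal in
`G`. Call `x` a period if `h (c * x) = h c` for every continuous `Γ`-invariant `h : M → ℝ` and
every `c`; the periods form a closed `G`-invariant subgroup. The defect `x ↦ ‖h ∘ (· * x) - h‖∞`
is continuous, vanishes at `1` and is constant on `Γ`-orbits, so all defects vanish at some `w` in
the closure of the `Λ`-orbit of `z`. As `Λ` is distal, its orbit closures are minimal (Ellis), so
`z` is in the orbit closure of `w` and is itself a period.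

On the closed subgroup `N` topologically generated by the `G`-orbit of `z`, every continuous
`Γ`-invariant function is therefore constant. For a `Γ`-invariant Borel set `E` and the Haar
probability `μ`, `x ↦ μ (E ∩ E x⁻¹)` is such a function, with integral `μ E ^ 2`; hence
`μ E ∈ {0, 1}`. So each saturation `Γ • B` of a nonempty open `B ⊆ N` is conull, and almost every
`x ∈ N` has `1` in the closure of its `Γ`-orbit, contradicting distality of `Γ`. -/

namespace MulAction

def IsDistal (G M : Type*) [Group M] [TopologicalSpace M] [SMul G M] : Prop :=
  ∀ x : M, x ≠ 1 → (1 : M) ∉ closure (orbit G x)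

instance {G M : Type*} [Group G] [MulAction G M] [TopologicalSpace M] [ContinuousConstSMul G M]
    (S : Subgroup G) : ContinuousConstSMul S M :=
  ⟨fun g => continuous_const_smul (g : G)⟩

variable {G M : Type*} [Group G] [TopologicalSpace M]

section Action

variable [MulAction G M]

theorem IsDistal.of_injective [Group M] {N : Type*} [Group N] [TopologicalSpace N] [MulAction G N]
    (f : N →* M) (hf : Continuous f) (hinj : Function.Injective f)
    (hequiv : ∀ (g : G) x, f (g • x) = g • f x) (hM : IsDistal G M) : IsDistal G N := by
  intro x hx hcl
  refine hM (f x) ((map_ne_one_iff f hinj).2 hx) ?_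
  rw [← map_one f]
  exact map_mem_closure hf hcl (by rintro _ ⟨g, rfl⟩; exact ⟨g, (hequiv g x).symm⟩)

theorem isDistal_subgroupOf_iff [Group M] {S T : Subgroup G} (h : S ≤ T) :
    IsDistal (S.subgroupOf T) M ↔ IsDistal S M := by
  have horbit : ∀ x : M, orbit (S.subgroupOf T) x = orbit S x := fun x => by
    ext y
    constructor
    · rintro ⟨⟨g, hg⟩, rfl⟩
      exact ⟨⟨g, hg⟩, rfl⟩
    · rintro ⟨⟨g, hg⟩, rfl⟩
      exact ⟨⟨⟨g, h hg⟩, hg⟩, rfl⟩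
  simp only [IsDistal, horbit]

variable (G M) in
def envelopingSemigroup : Set (M → M) := closure (Set.range fun g : G => (g • · : M → M))

theorem apply_mem_closure_orbit {p : M → M} (hp : p ∈ envelopingSemigroup G M) (x : M) :
    p x ∈ closure (orbit G x) :=
  map_mem_closure (f := fun r : M → M => r x) (continuous_apply x) hp
    (by rintro _ ⟨g, rfl⟩; exact mem_orbit x g)

theorem comp_mem_envelopingSemigroup [ContinuousConstSMul G M] {p q : M → M}
    (hp : p ∈ envelopingSemigroup G M) (hq : q ∈ envelopingSemigroup G M) :
    p ∘ q ∈ envelopingSemigroup G M := by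
  have hgq : ∀ g : G, (g • ·) ∘ q ∈ envelopingSemigroup G M := fun g =>
    map_mem_closure (f := ((g • ·) ∘ ·))
      (continuous_pi fun x => (continuous_const_smul g).comp (continuous_apply x))
      hq (by rintro _ ⟨g', rfl⟩; exact ⟨g * g', funext fun x => mul_smul g g' x⟩)
  rw [envelopingSemigroup, ← closure_closure]
  exact map_mem_closure (f := (· ∘ q)) (continuous_pi fun x => continuous_apply (q x)) hp
    (by rintro _ ⟨g, rfl⟩; exact hgq g)

end Action

variable [Group M] [MulDistribMulAction G M]

section Enveloping

variable [ContinuousMul M] [T2Space M]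

theorem map_mul_of_mem_envelopingSemigroup {p : M → M}
    (hp : p ∈ envelopingSemigroup G M) (x y : M) : p (x * y) = p x * p y := by
  have hclosed : IsClosed {r : M → M | r (x * y) = r x * r y} :=
    isClosed_eq (continuous_apply _) ((continuous_apply x).mul (continuous_apply y))
  exact closure_minimal (by rintro _ ⟨g, rfl⟩; exact smul_mul' g x y) hclosed hp

theorem injective_of_mem_envelopingSemigroup (hd : IsDistal G M) {p : M → M}
    (hp : p ∈ envelopingSemigroup G M) : Function.Injective p := by
  intro x y hxy
  have hp1 : p (x * y⁻¹) = 1 := by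
    refine mul_right_cancel (b := p y) ?_
    rw [← map_mul_of_mem_envelopingSemigroup hp, inv_mul_cancel_right, one_mul, hxy]
  by_contra hne
  exact hd _ (fun h => hne (mul_inv_eq_one.1 h)) (hp1 ▸ apply_mem_closure_orbit hp _)

variable [CompactSpace M] [ContinuousConstSMul G M]

theorem exists_leftInverse_mem_envelopingSemigroup (hd : IsDistal G M) {p : M → M}
    (hp : p ∈ envelopingSemigroup G M) :
    ∃ q ∈ envelopingSemigroup G M, Function.LeftInverse q p := by
  -- an idempotent `q ∘ p` of the compact semigroup `envelopingSemigroup G M ∘ p` is injective,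
  -- hence the identity
  let _ : TopologicalSpace (Function.End M) := Pi.topologicalSpace
  have : T2Space (Function.End M) := inferInstanceAs (T2Space (M → M))
  obtain ⟨_, ⟨q, hq, rfl⟩, hidem⟩ := exists_idempotent_in_compact_subsemigroup
    (M := Function.End M) (fun r => continuous_pi fun x => continuous_apply (r x))
    ((· ∘ p) '' envelopingSemigroup G M) ⟨_, _, subset_closure ⟨1, rfl⟩, rfl⟩
    (isClosed_closure.isCompact.image (continuous_pi fun x => continuous_apply (p x)))
    (by
      rintro _ ⟨q, hq, rfl⟩ _ ⟨q', hq', rfl⟩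
      exact ⟨q ∘ p ∘ q', comp_mem_envelopingSemigroup hq (comp_mem_envelopingSemigroup hp hq'),
        rfl⟩)
  exact ⟨q, hq, fun x => injective_of_mem_envelopingSemigroup hd
    (comp_mem_envelopingSemigroup hq hp) (congrFun hidem x)⟩

theorem IsDistal.mem_closure_orbit_symm (hd : IsDistal G M) {z w : M}
    (hw : w ∈ closure (orbit G z)) : z ∈ closure (orbit G w) := by
  have hclosed : IsClosed ((fun p : M → M => p z) '' envelopingSemigroup G M) :=
    (isClosed_closure.isCompact.image (continuous_apply z)).isClosed
  obtain ⟨p, hp, rfl⟩ := closure_minimal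
    (by rintro _ ⟨g, rfl⟩; exact ⟨(g • ·), subset_closure ⟨g, rfl⟩, rfl⟩) hclosed hw
  obtain ⟨q, hq, hqp⟩ := exists_leftInverse_mem_envelopingSemigroup hd hp
  have := apply_mem_closure_orbit hq (p z)
  rwa [hqp z] at this

end Enveloping

section Periods

variable (G M) in
def invariantPeriods : Subgroup M where
  carrier := {x | ∀ h : C(M, ℝ), (∀ (g : G) y, h (g • y) = h y) → ∀ c, h (c * x) = h c}
  one_mem' _ _ c := by rw [mul_one]
  mul_mem' {x y} hx hy h hh c := by rw [← mul_assoc, hy h hh, hx h hh]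
  inv_mem' {x} hx h hh c := by rw [← hx h hh (c * x⁻¹), inv_mul_cancel_right]

theorem smul_mem_invariantPeriods [ContinuousConstSMul G M] {Γ : Subgroup G} [Γ.Normal] (g : G)
    {x : M} (hx : x ∈ invariantPeriods Γ M) : g • x ∈ invariantPeriods Γ M := by
  intro h hh c
  let h' : C(M, ℝ) := h.comp ⟨(g • ·), continuous_const_smul g⟩
  have hh' : ∀ (γ : Γ) y, h' (γ • y) = h' y := fun γ y => by
    have := hh ⟨g * γ * g⁻¹, ‹Γ.Normal›.conj_mem _ γ.2 g⟩ (g • y)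
    simpa [h', mul_smul, Subgroup.smul_def] using this
  simpa [h', smul_mul'] using hx h' hh' (g⁻¹ • c)

variable [IsTopologicalGroup M]

theorem isClosed_invariantPeriods : IsClosed (invariantPeriods G M : Set M) := by
  simp only [invariantPeriods, Subgroup.coe_set_mk, Submonoid.coe_set_mk, Subsemigroup.coe_set_mk,
    Set.ofPred_forall]
  exact isClosed_iInter fun h => isClosed_iInter fun _ => isClosed_iInter fun c =>
    isClosed_eq (h.continuous.comp (continuous_const.mul continuous_id)) continuous_const

theorem topologicalClosure_closure_orbit_le {P : Subgroup M} (hP : IsClosed (P : Set M))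
    (hPs : ∀ g : G, ∀ x ∈ P, g • x ∈ P) {z : M} (hz : z ∈ P) :
    (Subgroup.closure (orbit G z)).topologicalClosure ≤ P :=
  Subgroup.topologicalClosure_minimal _
    ((Subgroup.closure_le _).2 (by rintro _ ⟨g, rfl⟩; exact hPs g z hz)) hP

theorem smul_mem_topologicalClosure_closure_orbit [ContinuousConstSMul G M] (g : G) {z x : M}
    (hx : x ∈ (Subgroup.closure (orbit G z)).topologicalClosure) :
    g • x ∈ (Subgroup.closure (orbit G z)).topologicalClosure := by
  refine Subgroup.topologicalClosure_minimal _ (t := Subgroup.comap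
    (MulDistribMulAction.toMonoidHom M g) (Subgroup.closure (orbit G z)).topologicalClosure)
    ((Subgroup.closure_le _).2 ?_) ((Subgroup.isClosed_topologicalClosure _).preimage
      (continuous_const_smul g)) hx
  rintro _ ⟨g', rfl⟩
  exact Subgroup.le_topologicalClosure _ (Subgroup.subset_closure ⟨g * g', mul_smul g g' z⟩)

variable [CompactSpace M]

noncomputable def periodDefect (h : C(M, ℝ)) (x : M) : ℝ :=
  dist (h.comp (ContinuousMap.mulRight x)) h

theorem continuous_periodDefect (h : C(M, ℝ)) : Continuous (periodDefect h) :=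
  (ContinuousMap.curry (h.comp ⟨fun p : M × M => p.2 * p.1, by fun_prop⟩)).continuous.dist
    continuous_const

@[simp]
theorem periodDefect_one (h : C(M, ℝ)) : periodDefect h 1 = 0 := by
  simp only [periodDefect, dist_eq_zero]
  ext c
  simp

theorem periodDefect_eq_zero_iff {h : C(M, ℝ)} {x : M} :
    periodDefect h x = 0 ↔ ∀ c, h (c * x) = h c := by
  simp [periodDefect, ContinuousMap.ext_iff]

theorem periodDefect_smul_le [ContinuousConstSMul G M] {h : C(M, ℝ)}
    (hh : ∀ (g : G) y, h (g • y) = h y) (g : G) (x : M) :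
    periodDefect h (g • x) ≤ periodDefect h x := by
  let σ : C(M, M) := ⟨(g⁻¹ • ·), continuous_const_smul g⁻¹⟩
  have hcomp :
      h.comp (ContinuousMap.mulRight (g • x)) = (h.comp (ContinuousMap.mulRight x)).comp σ := by
    ext c
    simpa [σ, smul_mul'] using hh g (g⁻¹ • c * x)
  have hinv : h = h.comp σ := by
    ext c
    exact (hh g⁻¹ c).symm
  calc dist (h.comp (ContinuousMap.mulRight (g • x))) h
      = dist ((h.comp (ContinuousMap.mulRight x)).comp σ) (h.comp σ) := by rw [← hcomp, ← hinv]
    _ ≤ periodDefect h x :=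
      (ContinuousMap.dist_le dist_nonneg).2 fun c =>
        ContinuousMap.dist_apply_le_dist (f := h.comp (ContinuousMap.mulRight x)) (g := h) (σ c)

theorem periodDefect_smul [ContinuousConstSMul G M] {h : C(M, ℝ)}
    (hh : ∀ (g : G) y, h (g • y) = h y) (g : G) (x : M) :
    periodDefect h (g • x) = periodDefect h x := by
  refine (periodDefect_smul_le hh g x).antisymm ?_
  simpa using periodDefect_smul_le hh g⁻¹ (g • x)

theorem exists_mem_closure_orbit_mem_invariantPeriods [ContinuousConstSMul G M]
    {Γ Λ : Subgroup G} [Γ.Normal] (hsup : Γ ⊔ Λ = ⊤) {z : M}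
    (hz : (1 : M) ∈ closure (orbit G z)) :
    ∃ w ∈ closure (orbit Λ z), w ∈ invariantPeriods Γ M := by
  let Φ : M → {h : C(M, ℝ) // ∀ (γ : Γ) y, h (γ • y) = h y} → ℝ :=
    fun x h => periodDefect h.1 x
  have hΦ : Continuous Φ := continuous_pi fun h => continuous_periodDefect h.1
  have hGΛ : Φ '' orbit G z ⊆ Φ '' orbit Λ z := by
    rintro _ ⟨_, ⟨g, rfl⟩, rfl⟩
    have hg : g ∈ ((Γ ⊔ Λ : Subgroup G) : Set G) := hsup ▸ Subgroup.mem_top g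
    rw [Subgroup.normal_mul] at hg
    obtain ⟨γ, hγ, l, hl, rfl⟩ := Set.mem_mul.1 hg
    refine ⟨l • z, ⟨⟨l, hl⟩, rfl⟩, funext fun h => ?_⟩
    simp only [Φ, mul_smul]
    exact (periodDefect_smul h.2 ⟨γ, hγ⟩ _).symm
  obtain ⟨w, hw, hw0⟩ : Φ 1 ∈ Φ '' closure (orbit Λ z) :=
    (isClosed_closure.isCompact.image hΦ).isClosed.closure_subset <|
      closure_mono (hGΛ.trans (Set.image_mono subset_closure))
        (map_mem_closure hΦ hz (Set.mapsTo_image _ _))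
  refine ⟨w, hw, fun h hh => periodDefect_eq_zero_iff.1 ?_⟩
  simpa [Φ] using congrFun hw0 ⟨h, fun γ => hh γ⟩

theorem mem_invariantPeriods_of_one_mem_closure_orbit [ContinuousConstSMul G M] [T2Space M]
    {Γ Λ : Subgroup G} [Γ.Normal] (hsup : Γ ⊔ Λ = ⊤) (hΛ : IsDistal Λ M) {z : M}
    (hz : (1 : M) ∈ closure (orbit G z)) : z ∈ invariantPeriods Γ M := by
  obtain ⟨w, hw, hwP⟩ := exists_mem_closure_orbit_mem_invariantPeriods hsup hz
  refine isClosed_invariantPeriods.closure_subset_iff.2 ?_ (hΛ.mem_closure_orbit_symm hw)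
  rintro _ ⟨l, rfl⟩
  exact smul_mem_invariantPeriods (l : G) hwP

end Periods

end MulAction

namespace MeasureTheory

variable {G M : Type*} [Group G] [Group M] [TopologicalSpace M] [IsTopologicalGroup M]
  [MeasurableSpace M] [BorelSpace M] (μ : Measure M)

theorem lintegral_measure_inter_preimage_mul_right [SecondCountableTopology M]
    [μ.IsMulLeftInvariant] [SFinite μ] {s : Set M} (hs : MeasurableSet s) :
    ∫⁻ x, μ (s ∩ (· * x) ⁻¹' s) ∂μ = μ s * μ s := by
  have hmp := measurePreserving_prod_mul_swap μ μ
  rw [← Measure.prod_prod, ← hmp.measure_preimage (hs.prod hs).nullMeasurableSet,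
    Measure.prod_apply (hmp.measurable (hs.prod hs))]
  rfl

variable [CompactSpace M] [μ.IsHaarMeasure] [IsProbabilityMeasure μ]

theorem isMulRightInvariant_of_isProbabilityMeasure : μ.IsMulRightInvariant := ⟨fun g => by
  have := Measure.isProbabilityMeasure_map (μ := μ) (measurable_mul_const g).aemeasurable
  exact Measure.isHaarMeasure_eq_of_isProbabilityMeasure _ _⟩

theorem measurePreserving_smul_of_isProbabilityMeasure [MulDistribMulAction G M]
    [ContinuousConstSMul G M] (g : G) : MeasurePreserving (g • · : M → M) μ μ := by
  have hc : Continuous (g • · : M → M) := continuous_const_smul g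
  refine ⟨hc.measurable, ?_⟩
  have : (μ.map (g • · : M → M)).IsHaarMeasure :=
    Measure.isHaarMeasure_map_of_isFiniteMeasure μ (MulDistribMulAction.toMonoidHom M g) hc
      (MulAction.surjective g)
  have := Measure.isProbabilityMeasure_map (μ := μ) hc.aemeasurable
  exact Measure.isHaarMeasure_eq_of_isProbabilityMeasure _ _

theorem continuous_measureReal_inter_preimage_mul_right {s : Set M} (hs : MeasurableSet s) :
    Continuous fun x => μ.real (s ∩ (· * x) ⁻¹' s) := by
  have := isMulRightInvariant_of_isProbabilityMeasure μ
  let f : C(M, C(M, M)) := ContinuousMap.curry ⟨fun p : M × M => p.2 * p.1, by fun_prop⟩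
  rw [continuous_iff_continuousAt]
  intro x₀
  have hT := tendsto_measure_symmDiff_preimage_nhds_zero (f.continuous.tendsto x₀)
    (Filter.Eventually.of_forall fun x => measurePreserving_mul_right μ x)
    (measurePreserving_mul_right μ x₀) hs.nullMeasurableSet (measure_ne_top μ s)
  refine tendsto_iff_dist_tendsto_zero.2 <| squeeze_zero (fun _ => dist_nonneg) (fun x => ?_)
    ((ENNReal.tendsto_toReal ENNReal.zero_ne_top).comp hT)
  rw [Real.dist_eq]
  refine (abs_measureReal_sub_le_measureReal_symmDiff
    (hs.inter (hs.preimage (measurable_mul_const x))).nullMeasurableSet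
    (hs.inter (hs.preimage (measurable_mul_const x₀))).nullMeasurableSet).trans ?_
  rw [← Set.inter_symmDiff_distrib_left]
  exact measureReal_mono Set.inter_subset_right

end MeasureTheory

abbrev Subgroup.mulDistribMulActionOfStable {G M : Type*} [Group G] [Group M]
    [MulDistribMulAction G M] (N : Subgroup M) (hN : ∀ (g : G), ∀ x ∈ N, g • x ∈ N) :
    MulDistribMulAction G N where
  smul g x := ⟨g • x, hN g x x.2⟩
  one_smul x := Subtype.ext (one_smul G (x : M))
  mul_smul g g' x := Subtype.ext (mul_smul g g' (x : M))
  smul_mul g x y := Subtype.ext (smul_mul' g (x : M) y)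
  smul_one g := Subtype.ext (smul_one g)

namespace MulAction

variable {G M : Type*} [Group G] [Group M] [TopologicalSpace M] [MulDistribMulAction G M]
  [IsTopologicalGroup M] [CompactSpace M] [ContinuousConstSMul G M]

section Ergodic

variable [MeasurableSpace M] [BorelSpace M] [SecondCountableTopology M] (μ : Measure M)
  [μ.IsHaarMeasure] [IsProbabilityMeasure μ]

theorem measure_eq_zero_or_one_of_invariantPeriods_eq_top (hP : invariantPeriods G M = ⊤)
    {s : Set M} (hs : MeasurableSet s) (hinv : ∀ (g : G) y, g • y ∈ s ↔ y ∈ s) :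
    μ s = 0 ∨ μ s = 1 := by
  let ψ : C(M, ℝ) := ⟨_, continuous_measureReal_inter_preimage_mul_right μ hs⟩
  have hψ : ∀ (g : G) x, ψ (g • x) = ψ x := fun g x => by
    have hpre : s ∩ (· * g • x) ⁻¹' s = (g⁻¹ • ·) ⁻¹' (s ∩ (· * x) ⁻¹' s) := by
      ext y
      simp only [Set.mem_inter_iff, Set.mem_preimage]
      rw [← hinv g⁻¹ y, ← hinv g (g⁻¹ • y * x), smul_mul', smul_inv_smul]
    simp only [ψ, ContinuousMap.coe_mk, Measure.real, hpre,
      (measurePreserving_smul_of_isProbabilityMeasure μ g⁻¹).measure_preimage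
        (hs.inter (hs.preimage (measurable_mul_const x))).nullMeasurableSet]
  have hconst : ∀ x, μ (s ∩ (· * x) ⁻¹' s) = μ s := fun x => by
    have := (hP ▸ Subgroup.mem_top x : x ∈ invariantPeriods G M) ψ hψ 1
    simp only [ψ, ContinuousMap.coe_mk, one_mul, mul_one, Set.preimage_id', Set.inter_self] at this
    exact (ENNReal.toReal_eq_toReal_iff' (measure_ne_top μ _) (measure_ne_top μ _)).1 this
  have hsq := lintegral_measure_inter_preimage_mul_right μ hs
  simp only [hconst, lintegral_const, measure_univ, mul_one] at hsq
  by_cases h0 : μ s = 0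
  · exact Or.inl h0
  · exact Or.inr ((ENNReal.mul_eq_left h0 (measure_ne_top μ s)).1 hsq.symm)

theorem measure_iUnion_smul_eq_one (hP : invariantPeriods G M = ⊤) {B : Set M} (hB : IsOpen B)
    (hne : B.Nonempty) : μ (⋃ g : G, g • B) = 1 := by
  have hopen : IsOpen (⋃ g : G, g • B) := isOpen_iUnion fun g => hB.smul g
  refine (measure_eq_zero_or_one_of_invariantPeriods_eq_top μ hP hopen.measurableSet
    fun g y => ?_).resolve_left ?_
  · simp only [Set.mem_iUnion, Set.mem_smul_set_iff_inv_smul_mem]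
    constructor
    · rintro ⟨g', h⟩
      exact ⟨g⁻¹ * g', by simpa [mul_smul] using h⟩
    · rintro ⟨g', h⟩
      exact ⟨g * g', by simpa [mul_smul] using h⟩
  · exact ((hB.measure_pos μ hne).trans_le
      (measure_mono (Set.subset_iUnion_of_subset 1 (by simp)))).ne'

theorem ae_one_mem_closure_orbit (hP : invariantPeriods G M = ⊤) :
    ∀ᵐ x ∂μ, (1 : M) ∈ closure (orbit G x) := by
  have hae : ∀ᵐ x ∂μ, ∀ B ∈ countableBasis M, (1 : M) ∈ B → x ∈ ⋃ g : G, g • B := by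
    rw [ae_ball_iff (countable_countableBasis M)]
    intro B hB
    by_cases h1 : (1 : M) ∈ B
    · have hopen := isOpen_of_mem_countableBasis hB
      have hfull : μ (⋃ g : G, g • B)ᶜ = 0 := (prob_compl_eq_zero_iff
        (isOpen_iUnion fun g => hopen.smul g).measurableSet).2
          (measure_iUnion_smul_eq_one μ hP hopen ⟨1, h1⟩)
      filter_upwards [measure_eq_zero_iff_ae_notMem.1 hfull] with x hx _
      simpa using hx
    · exact Filter.Eventually.of_forall fun _ h => absurd h h1
  filter_upwards [hae] with x hx
  rw [mem_closure_iff]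
  intro o ho h1o
  obtain ⟨B, hB, h1B, hBo⟩ := (isBasis_countableBasis M).exists_subset_of_mem_open h1o ho
  obtain ⟨g, hg⟩ := Set.mem_iUnion.1 (hx B hB h1B)
  exact ⟨g⁻¹ • x, hBo (Set.mem_smul_set_iff_inv_smul_mem.1 hg), mem_orbit x g⁻¹⟩

end Ergodic

variable [MetrizableSpace M]

theorem not_isDistal_of_invariantPeriods_eq_top [Nontrivial M]
    (hP : invariantPeriods G M = ⊤) : ¬ IsDistal G M := by
  borelize M
  let μ := Measure.haarMeasure (⊤ : PositiveCompacts M)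
  have : IsProbabilityMeasure μ :=
    ⟨by simpa using Measure.haarMeasure_self (K₀ := (⊤ : PositiveCompacts M))⟩
  obtain ⟨x, hx1, hx⟩ := Measure.exists_mem_of_measure_ne_zero_of_ae
    (isOpen_compl_singleton.measure_pos μ (exists_ne (1 : M))).ne'
    (ae_restrict_of_ae (ae_one_mem_closure_orbit μ hP))
  exact fun hd => hd x hx1 hx

theorem IsDistal.of_normal_of_sup_eq_top {Γ Λ : Subgroup G} [Γ.Normal] (hsup : Γ ⊔ Λ = ⊤)
    (hΓ : IsDistal Γ M) (hΛ : IsDistal Λ M) : IsDistal G M := by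
  intro z hz hcl
  set N := (Subgroup.closure (orbit G z)).topologicalClosure
  have hN : ∀ (g : G), ∀ x ∈ N, g • x ∈ N := fun g _ => smul_mem_topologicalClosure_closure_orbit g
  let _ := N.mulDistribMulActionOfStable hN
  have : ContinuousConstSMul G N :=
    ⟨fun g => (continuous_const_smul g).subtype_map fun x => hN g x⟩
  have : CompactSpace N :=
    isCompact_iff_compactSpace.1 (Subgroup.isClosed_topologicalClosure _).isCompact
  have : MetrizableSpace N := MetrizableSpace.subtype (N : Set M)
  have hdist : ∀ S : Subgroup G, IsDistal S M → IsDistal S N := fun S hS =>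
    hS.of_injective N.subtype continuous_subtype_val Subtype.val_injective fun _ _ => rfl
  let z' : N := ⟨z, Subgroup.le_topologicalClosure _ (Subgroup.subset_closure (mem_orbit_self z))⟩
  have hz' : (1 : N) ∈ closure (orbit G z') := by
    rw [Topology.IsEmbedding.subtypeVal.closure_eq_preimage_closure_image, Set.mem_preimage, orbit,
      ← Set.range_comp]
    exact hcl
  have hP : invariantPeriods Γ N = ⊤ := by
    have hz'P := mem_invariantPeriods_of_one_mem_closure_orbit hsup (hdist Λ hΛ) hz'
    have hNP : N ≤ (invariantPeriods Γ N).map N.subtype := by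
      refine topologicalClosure_closure_orbit_le ?_ ?_ ⟨z', hz'P, rfl⟩
      · rw [Subgroup.coe_map]
        exact (isClosed_invariantPeriods.isCompact.image continuous_subtype_val).isClosed
      · rintro g _ ⟨x, hx, rfl⟩
        exact ⟨g • x, smul_mem_invariantPeriods g hx, rfl⟩
    refine eq_top_iff.2 fun x _ => ?_
    obtain ⟨y, hy, hyx⟩ := hNP x.2
    rwa [← Subtype.val_injective hyx]
  have : Nontrivial N := ⟨⟨z', 1, fun h => hz (congrArg Subtype.val h)⟩⟩
  exact not_isDistal_of_invariantPeriods_eq_top hP (hdist Γ hΓ)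

end MulAction

def continuousMulAut (K : Type*) [Group K] [TopologicalSpace K] [CompactSpace K] [T2Space K] :
    Subgroup (MulAut K) where
  carrier := {e | Continuous e}
  one_mem' := continuous_id
  mul_mem' ha hb := ha.comp hb
  inv_mem' {e} he := (he.homeoOfEquivCompactToT2 (f := e.toEquiv)).symm.continuous

theorem Subgroup.isDistalAction_autMaps_iff {K : Type*} [Group K] [TopologicalSpace K]
    (S : Subgroup (MulAut K)) : IsDistalAction S.autMaps ↔ MulAction.IsDistal S K := by
  have horbit : ∀ x : K, {y | ∃ f ∈ S.autMaps, f x = y} = MulAction.orbit S x := fun x => by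
    ext y
    constructor
    · rintro ⟨_, ⟨β, hβ, rfl⟩, rfl⟩
      exact ⟨⟨β, hβ⟩, rfl⟩
    · rintro ⟨⟨β, hβ⟩, rfl⟩
      exact ⟨β, ⟨β, hβ, rfl⟩, rfl⟩
  simp only [IsDistalAction, MulAction.IsDistal, horbit]

theorem MulAut.cycMaps_eq_autMaps_zpowers {K : Type*} [Group K] (α : MulAut K) :
    α.cycMaps = (Subgroup.zpowers α).autMaps := by
  ext f
  simp [MulAut.cycMaps, Subgroup.autMaps, Subgroup.mem_zpowers_iff]

/-- Let `Γ` be a group of continuous automorphisms of a compact metrizable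
group `K` and `α` a continuous automorphism of `K`.  If `Γ` acts distally on `K`, `α` is
distal on `K` and `α Γ α⁻¹ = Γ`, then the group generated by `Γ` and `α` acts distally
on `K`. -/
theorem stmt10 {K : Type*} [Group K] [TopologicalSpace K] [IsTopologicalGroup K]
    [CompactSpace K] [MetrizableSpace K]
    (Γ : Subgroup (MulAut K)) (hcont : ∀ γ ∈ Γ, Continuous ⇑γ)
    (α : MulAut K) (hαcont : Continuous ⇑α)
    (hΓ : IsDistalAction Γ.autMaps)
    (hα : IsDistalAction (MulAut.cycMaps α))
    (hconj : ∀ γ : MulAut K, γ ∈ Γ ↔ α * γ * α⁻¹ ∈ Γ) :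
    IsDistalAction (Γ ⊔ Subgroup.zpowers α).autMaps := by
  set Δ := Γ ⊔ Subgroup.zpowers α
  have hΔ : Δ ≤ continuousMulAut K := sup_le hcont (Subgroup.zpowers_le.2 hαcont)
  have : ContinuousConstSMul Δ K := ⟨fun g => hΔ g.2⟩
  have : (Γ.subgroupOf Δ).Normal := (Subgroup.normal_subgroupOf_iff_le_normalizer le_sup_left).2
    (sup_le Subgroup.le_normalizer (Subgroup.zpowers_le.2 (Subgroup.mem_normalizer_iff.2 hconj)))
  rw [Subgroup.isDistalAction_autMaps_iff]
  refine MulAction.IsDistal.of_normal_of_sup_eq_top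
    (codisjoint_iff.1 (Subgroup.codisjoint_subgroupOf_sup Γ (Subgroup.zpowers α))) ?_ ?_
  · rwa [MulAction.isDistal_subgroupOf_iff le_sup_left, ← Subgroup.isDistalAction_autMaps_iff]
  · rwa [MulAction.isDistal_subgroupOf_iff le_sup_right, ← Subgroup.isDistalAction_autMaps_iff,
      ← MulAut.cycMaps_eq_autMaps_zpowers]
end
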